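/- Let a, b, p, s and r_1,…,r_s be positive integers with a ≤ b ≤ p - 1 and a + b ≥ p + 1. Then N(K_{r_1,…,r_s}, K_a) + N(K_{r_1,…,r_s}, K_b) ≤ N(K_{r_1,…,r_s}, K_{p-1}) + N(K_{r_1,…,r_s}, K_{a+b-p+1}). -/

import Mathlib

open SimpleGraph

/-- `N(H, G)`: the number of subgraphs of `G` isomorphic to `H`. -/
noncomputable def copyCount {α β : Type*} (H : SimpleGraph α) (G : SimpleGraph β) : ℕ :=
  Nat.card {G' : G.Subgraph // Nonempty (G'.coe ≃g H)}

/-- The complete multipartite graph `K_{r 0, …, r (s-1)}` with parts of sizes `r i`. -/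
abbrev KR {s : ℕ} (r : Fin s → ℕ) : SimpleGraph (Σ i : Fin s, Fin (r i)) :=
  completeMultipartiteGraph fun i => Fin (r i)

/-- Adjacency pattern of `G(n,c,k)` on indices: the first `k` indices are dominating and
the first `c+1-k` indices form a clique. -/
def gAdjNat (c k a b : ℕ) : Prop :=
  a < k ∨ b < k ∨ (a < c + 1 - k ∧ b < c + 1 - k)

/-- The graph `G(n,c,k) = K_k ∨ (K_{c+1-2k} + \overline{K_{n-c-1+k}})`: the first `k`
vertices are dominating, the first `c+1-k` vertices form a clique `K_k ∨ K_{c+1-2k}`, and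
the remaining `n-c-1+k` vertices are independent, adjacent exactly to the first `k`. -/
def gGraph (n c k : ℕ) : SimpleGraph (Fin n) where
  Adj v w := v ≠ w ∧ gAdjNat c k v.val w.val
  symm := ⟨by intro v w h; refine ⟨Ne.symm h.1, ?_⟩; unfold gAdjNat at *; tauto⟩
  loopless := ⟨by intro v h; exact h.1 rfl⟩

/-- `g_{r_1,…,r_s}(n,c,k)`: the number of copies of `K_{r_1,…,r_s}` in `G(n,c,k)`. -/
noncomputable def gCount {s : ℕ} (r : Fin s → ℕ) (n c k : ℕ) : ℕ :=
  _root_.copyCount (KR r) (gGraph n c k)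

/-- A graph has circumference `c` if it has a cycle of length `c` and no longer cycle. -/
def HasCircumference {V : Type*} (G : SimpleGraph V) (c : ℕ) : Prop :=
  (∃ (v : V) (w : G.Walk v v), w.IsCycle ∧ w.length = c) ∧
    ∀ (v : V) (w : G.Walk v v), w.IsCycle → w.length ≤ c

/-- A graph has detour order `p` if a longest path has `p` vertices. -/
def HasDetourOrder {V : Type*} (G : SimpleGraph V) (p : ℕ) : Prop :=
  (∃ (u v : V) (w : G.Walk u v), w.IsPath ∧ w.length + 1 = p) ∧
    ∀ (u v : V) (w : G.Walk u v), w.IsPath → w.length + 1 ≤ p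

/-- A graph is 2-connected if it has at least 3 vertices and deleting any single
vertex leaves a connected graph. -/
def TwoConnected {V : Type*} [Fintype V] (G : SimpleGraph V) : Prop :=
  3 ≤ Fintype.card V ∧ ∀ v : V, (G.induce ({v}ᶜ : Set V)).Connected

/-- A graph is traceable if it has a Hamiltonian path. -/
def Traceable {V : Type*} [DecidableEq V] (G : SimpleGraph V) : Prop :=
  ∃ (u v : V) (w : G.Walk u v), w.IsHamiltonian

/-- A graph has matching number `m` if it has a matching with `m` edges and no larger one. -/
def HasMatchingNumber {V : Type*} (G : SimpleGraph V) (m : ℕ) : Prop :=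
  (∃ M : G.Subgraph, M.IsMatching ∧ Nat.card M.edgeSet = m) ∧
    ∀ M : G.Subgraph, M.IsMatching → Nat.card M.edgeSet ≤ m


/-! A copy of a graph `H` on `m` vertices inside `K_n` is an `m`-set of vertices together with a
copy of `H` spanning it, so `N(H, K_n) = C(n, m) · N(H, K_m)`. The inequality therefore reduces to
`C(a, m) + C(b, m) ≤ C(p - 1, m) + C(a + b - p + 1, m)`, an instance of the convexity of
`n ↦ C(n, m)`: both pairs have the same sum and `a, b` lie between `a + b - p + 1` and `p - 1`. -/

theorem Nat.choose_add_add_choose_le {x y : ℕ} (hxy : x ≤ y) (d k : ℕ) :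
    (x + d).choose k + y.choose k ≤ x.choose k + (y + d).choose k := by
  cases k with
  | zero => simp
  | succ k =>
    induction d with
    | zero => simp only [Nat.add_zero]; omega
    | succ d ih =>
      have hmono : (x + d).choose k ≤ (y + d).choose k := Nat.choose_le_choose k (by omega)
      rw [← Nat.add_assoc, ← Nat.add_assoc, Nat.choose_succ_succ', Nat.choose_succ_succ']
      omega

namespace SimpleGraph.Subgraph

variable {V W : Type*} {G : SimpleGraph V} {G₂ : SimpleGraph W}

lemma comap_map_of_embedding (f : G ↪g G₂) (G' : G.Subgraph) :
    (G'.map f.toHom).comap f.toHom = G' := by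
  ext u v
  · simp
  · simp only [comap_adj, map_adj, Relation.Map, f.injective.eq_iff, exists_eq_right_right,
      exists_eq_right, RelEmbedding.coe_toRelHom]
    exact ⟨And.right, fun h => ⟨G'.adj_sub h, h⟩⟩

lemma map_comap_of_verts_subset_range (f : G ↪g G₂) (G' : G₂.Subgraph)
    (h : G'.verts ⊆ Set.range f) : (G'.comap f.toHom).map f.toHom = G' := by
  ext x y
  · simp only [map_verts, comap_verts, Set.image_preimage_eq_inter_range]
    exact ⟨fun hx => hx.1, fun hx => ⟨hx, h hx⟩⟩
  · constructor
    · rintro ⟨u, v, ⟨-, huv⟩, rfl, rfl⟩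
      exact huv
    · intro hxy
      obtain ⟨u, rfl⟩ := h (G'.edge_vert hxy)
      obtain ⟨v, rfl⟩ := h (G'.edge_vert hxy.symm)
      exact ⟨u, v, ⟨f.map_adj_iff.mp (G'.adj_sub hxy), hxy⟩, rfl, rfl⟩

variable {γ : Type*} {H : SimpleGraph γ}

lemma ncard_verts_of_iso {G' : G.Subgraph} (e : G'.coe ≃g H) : G'.verts.ncard = Nat.card γ := by
  rw [← Nat.card_coe_set_eq, Nat.card_congr e.toEquiv]

lemma verts_eq_univ_of_iso [Finite γ] {G : SimpleGraph γ} {G' : G.Subgraph} (e : G'.coe ≃g H) :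
    G'.verts = Set.univ :=
  Set.eq_of_subset_of_ncard_le (Set.subset_univ _) (by rw [ncard_verts_of_iso e, Set.ncard_univ])

end SimpleGraph.Subgraph

section CopyCount

variable {γ V : Type*} (H : SimpleGraph γ)

lemma card_copies_completeGraph_verts_eq_range [Finite γ] (f : γ ↪ V) :
    Nat.card
        {G' : (completeGraph V).Subgraph // G'.verts = Set.range f ∧ Nonempty (G'.coe ≃g H)} =
      _root_.copyCount H (completeGraph γ) := by
  set F := Embedding.completeGraph f
  symm
  refine Nat.card_eq_of_bijective (fun G'' => ⟨G''.1.map F.toHom, ?_, ?_⟩) ⟨?_, ?_⟩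
  · simp [Subgraph.verts_eq_univ_of_iso G''.2.some, F]
  · exact ⟨(F.toCopy.isoSubgraphMap G''.1).symm.trans G''.2.some⟩
  · intro G₁ G₂ h
    have := congrArg (fun G' => G'.1.comap F.toHom) h
    simp only [Subgraph.comap_map_of_embedding] at this
    exact Subtype.ext this
  · rintro ⟨G', hv, hiso⟩
    have hmap := Subgraph.map_comap_of_verts_subset_range F G' (by rw [hv]; rfl)
    obtain ⟨e⟩ : Nonempty (((G'.comap F.toHom).map F.toHom).coe ≃g H) := by rwa [hmap]
    exact ⟨⟨G'.comap F.toHom, ⟨(F.toCopy.isoSubgraphMap _).trans e⟩⟩, Subtype.ext hmap⟩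

lemma card_copies_completeGraph_verts_eq [Fintype γ] (S : Finset V)
    (hS : S.card = Fintype.card γ) :
    Nat.card {G' : (completeGraph V).Subgraph // G'.verts = S ∧ Nonempty (G'.coe ≃g H)} =
      _root_.copyCount H (completeGraph γ) := by
  let e : γ ≃ S := Fintype.equivOfCardEq (by rw [Fintype.card_coe, hS])
  have hrange : Set.range (e.toEmbedding.trans (Function.Embedding.subtype (· ∈ S))) = S := by
    rw [Function.Embedding.coe_trans, Set.range_comp, Equiv.coe_toEmbedding, e.range_eq_univ,
      Set.image_univ, Function.Embedding.coe_subtype, Subtype.range_coe]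
  rw [← hrange]
  exact card_copies_completeGraph_verts_eq_range H _

open scoped Classical in
noncomputable def copiesEquivSigmaVerts [Fintype γ] [Fintype V] :
    {G' : (completeGraph V).Subgraph // Nonempty (G'.coe ≃g H)} ≃
      Σ S : {S : Finset V // S.card = Fintype.card γ},
        {G' : (completeGraph V).Subgraph // G'.verts = S.1 ∧ Nonempty (G'.coe ≃g H)} where
  toFun G' := ⟨⟨G'.1.verts.toFinset, by
      rw [← Set.ncard_eq_toFinset_card', Subgraph.ncard_verts_of_iso G'.2.some,
        Nat.card_eq_fintype_card]⟩,
    ⟨G'.1, by simp, G'.2⟩⟩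
  invFun G' := ⟨G'.2.1, G'.2.2.2⟩
  left_inv _ := rfl
  right_inv := by
    rintro ⟨⟨S, -⟩, G', hv, -⟩
    obtain rfl : S = G'.verts.toFinset := by ext; simp [hv]
    rfl

theorem copyCount_completeGraph [Fintype γ] [Fintype V] :
    _root_.copyCount H (completeGraph V) =
      (Fintype.card V).choose (Fintype.card γ) * _root_.copyCount H (completeGraph γ) := by
  rw [_root_.copyCount, Nat.card_congr (copiesEquivSigmaVerts H), Nat.card_sigma]
  simp only [fun S : {S : Finset V // S.card = Fintype.card γ} =>
      card_copies_completeGraph_verts_eq H S.1 S.2, Finset.sum_const,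
    Finset.card_univ, Fintype.card_finset_len, smul_eq_mul]

end CopyCount

theorem statement_14_general (a b p s : ℕ) (r : Fin s → ℕ)
    (hab : a ≤ b) (hbp : b ≤ p - 1) (habp : p + 1 ≤ a + b) :
    _root_.copyCount (KR r) (completeGraph (Fin a)) + _root_.copyCount (KR r) (completeGraph (Fin b)) ≤
      _root_.copyCount (KR r) (completeGraph (Fin (p - 1))) +
        _root_.copyCount (KR r) (completeGraph (Fin (a + b - p + 1))) := by
  simp only [copyCount_completeGraph (KR r) (V := Fin _), Fintype.card_fin, ← Nat.add_mul]
  refine Nat.mul_le_mul_right _ ?_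
  have key := Nat.choose_add_add_choose_le (x := a + b - p + 1) (y := b) (by omega) (p - 1 - b)
    (Fintype.card (Σ i : Fin s, Fin (r i)))
  rw [show a + b - p + 1 + (p - 1 - b) = a by omega, show b + (p - 1 - b) = p - 1 by omega] at key
  omega

/-- If `a ≤ b ≤ p - 1` and `a + b ≥ p + 1`, then `N(K_{r_1,…,r_s}, K_a) +
N(K_{r_1,…,r_s}, K_b) ≤ N(K_{r_1,…,r_s}, K_{p-1}) + N(K_{r_1,…,r_s}, K_{a+b-p+1})`. -/
theorem statement_14 (a b p s : ℕ) (r : Fin s → ℕ)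
    (ha : 0 < a) (hb : 0 < b) (hp : 0 < p) (hs : 0 < s) (hr : ∀ i, 0 < r i)
    (hab : a ≤ b) (hbp : b ≤ p - 1) (habp : p + 1 ≤ a + b) :
    _root_.copyCount (KR r) (completeGraph (Fin a)) + _root_.copyCount (KR r) (completeGraph (Fin b)) ≤
      _root_.copyCount (KR r) (completeGraph (Fin (p - 1))) +
        _root_.copyCount (KR r) (completeGraph (Fin (a + b - p + 1))) :=
  statement_14_general a b p s r hab hbp habp
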